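/- The 2-form ω_ε = 3ε(x² − t)(dt∧dx + dy∧dz) + 2y dt∧dy + (2y − 6εxy) dz∧dx − (2z + 3εy) dt∧dz − 2z dx∧dy on ℝ⁴ is closed, and its zero set equals {(t,x,y,z) : x² = t, y = 0, z = 0}, which coincides with the critical point set of the cusp model f(t,x,y,z) = (t, x³ − 3xt + y² − z²). -/

import Mathlib

/-!
Closedness is a direct computation of the partial derivatives. As `ε ≠ 0`, the `dt∧dx`, `dt∧dy`
and `dx∧dy` coefficients alone cut out `x² = t, y = 0, z = 0`. The differential of the cusp model
is `(dt, dg)` with `g = x³ − 3xt + y² − z²`; it is onto `ℝ²` exactly when `dg` does not vanish on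
the `(x, y, z)`-directions, i.e. unless `∂g/∂x = 3(x² − t)`, `∂g/∂y = 2y`, `∂g/∂z = −2z` all vanish.
-/

noncomputable def pT (f : ℝ → ℝ → ℝ → ℝ → ℝ) (t x y z : ℝ) : ℝ :=
  deriv (fun u => f u x y z) t
noncomputable def pX (f : ℝ → ℝ → ℝ → ℝ → ℝ) (t x y z : ℝ) : ℝ :=
  deriv (fun u => f t u y z) x
noncomputable def pY (f : ℝ → ℝ → ℝ → ℝ → ℝ) (t x y z : ℝ) : ℝ :=
  deriv (fun u => f t x u z) y
noncomputable def pZ (f : ℝ → ℝ → ℝ → ℝ → ℝ) (t x y z : ℝ) : ℝ :=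
  deriv (fun u => f t x y u) z

/-! Coefficients of
`ω_ε = 3ε(x²−t)(dt∧dx + dy∧dz) + 2y dt∧dy + (2y − 6εxy) dz∧dx
       − (2z + 3εy) dt∧dz − 2z dx∧dy`
in the basis `dt∧dx, dt∧dy, dt∧dz, dx∧dy, dx∧dz, dy∧dz`. -/
def Ctx (ε : ℝ) : ℝ → ℝ → ℝ → ℝ → ℝ := fun t x _ _ => 3 * ε * (x ^ 2 - t)
def Cty (ε : ℝ) : ℝ → ℝ → ℝ → ℝ → ℝ := fun _ _ y _ => 2 * y
def Ctz (ε : ℝ) : ℝ → ℝ → ℝ → ℝ → ℝ := fun _ _ y z => -(2 * z + 3 * ε * y)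
def Cxy (ε : ℝ) : ℝ → ℝ → ℝ → ℝ → ℝ := fun _ _ _ z => -2 * z
def Cxz (ε : ℝ) : ℝ → ℝ → ℝ → ℝ → ℝ := fun _ x y _ => -(2 * y - 6 * ε * x * y)
def Cyz (ε : ℝ) : ℝ → ℝ → ℝ → ℝ → ℝ := fun t x _ _ => 3 * ε * (x ^ 2 - t)

open Function

theorem LinearMap.rank_lt_finrank_iff_not_surjective {K V W : Type*} [DivisionRing K]
    [AddCommGroup V] [Module K V] [AddCommGroup W] [Module K W] [FiniteDimensional K W]
    (f : V →ₗ[K] W) : f.rank < Module.finrank K W ↔ ¬Surjective f := by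
  rw [← LinearMap.range_eq_top, LinearMap.rank, ← (LinearMap.range f).finrank_eq_rank,
    Nat.cast_lt]
  refine ⟨fun h htop => ?_, fun h => Submodule.finrank_lt h⟩
  rw [htop, finrank_top] at h
  exact lt_irrefl _ h

theorem LinearMap.surjective_fst_prod_iff {K F : Type*} [Field K] [AddCommGroup F]
    [Module K F] (φ : K × F →ₗ[K] K) :
    Surjective ((LinearMap.fst K K F).prod φ) ↔ φ ∘ₗ LinearMap.inr K K F ≠ 0 := by
  constructor
  · intro hsurj hφ
    obtain ⟨v, hv⟩ := hsurj (0, 1)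
    have hv1 : v.1 = 0 := congrArg Prod.fst hv
    have hv2 : φ v = 1 := congrArg Prod.snd hv
    have hv_inr : v = LinearMap.inr K K F v.2 := by ext <;> simp [hv1]
    rw [hv_inr, ← LinearMap.comp_apply, hφ] at hv2
    simp at hv2
  · intro hφ ⟨a, b⟩
    obtain ⟨w, hw⟩ : ∃ w, φ (0, w) ≠ 0 := by
      by_contra! h
      exact hφ (LinearMap.ext h)
    refine ⟨(a, 0) + ((b - φ (a, 0)) / φ (0, w)) • (0, w), ?_⟩
    ext
    · simp
    · simp only [LinearMap.prod_apply, Function.prod, map_add, map_smul, Prod.snd_add,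
        Prod.smul_snd, smul_eq_mul]
      field_simp
      ring

theorem cuspForm_closed (ε t x y z : ℝ) :
    pT (Cxy ε) t x y z - pX (Cty ε) t x y z + pY (Ctx ε) t x y z = 0 ∧
    pT (Cxz ε) t x y z - pX (Ctz ε) t x y z + pZ (Ctx ε) t x y z = 0 ∧
    pT (Cyz ε) t x y z - pY (Ctz ε) t x y z + pZ (Cty ε) t x y z = 0 ∧
    pX (Cyz ε) t x y z - pY (Cxz ε) t x y z + pZ (Cxy ε) t x y z = 0 := by
  simp (disch := fun_prop) [pT, pX, pY, pZ, Ctx, Cty, Ctz, Cxy, Cxz, Cyz, deriv_fun_sub]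
  ring

theorem cuspForm_eq_zero_iff {ε : ℝ} (hε : ε ≠ 0) (t x y z : ℝ) :
    (Ctx ε t x y z = 0 ∧ Cty ε t x y z = 0 ∧ Ctz ε t x y z = 0 ∧ Cxy ε t x y z = 0 ∧
      Cxz ε t x y z = 0 ∧ Cyz ε t x y z = 0) ↔ x ^ 2 = t ∧ y = 0 ∧ z = 0 := by
  simp only [Ctx, Cty, Ctz, Cxy, Cxz, Cyz]
  constructor
  · rintro ⟨hxt, hy, -, hz, -, -⟩
    refine ⟨?_, by linarith, by linarith⟩
    have : x ^ 2 - t = 0 := by simpa [hε] using hxt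
    linarith
  · rintro ⟨hxt, rfl, rfl⟩
    simp [hxt]

def cuspHeight (q : ℝ × ℝ × ℝ × ℝ) : ℝ :=
  q.2.1 ^ 3 - 3 * q.2.1 * q.1 + q.2.2.1 ^ 2 - q.2.2.2 ^ 2

theorem differentiable_cuspHeight : Differentiable ℝ cuspHeight := by
  unfold cuspHeight
  fun_prop

theorem fderiv_cuspHeight_inr (p : ℝ × ℝ × ℝ × ℝ) (w : ℝ × ℝ × ℝ) :
    fderiv ℝ cuspHeight p (0, w) =
      3 * (p.2.1 ^ 2 - p.1) * w.1 + 2 * p.2.2.1 * w.2.1 - 2 * p.2.2.2 * w.2.2 := by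
  have hT : HasFDerivAt (𝕜 := ℝ) (fun q : ℝ × ℝ × ℝ × ℝ => q.1) _ p := hasFDerivAt_fst
  have hX : HasFDerivAt (𝕜 := ℝ) (fun q : ℝ × ℝ × ℝ × ℝ => q.2.1) _ p := hasFDerivAt_snd.fst
  have hY : HasFDerivAt (𝕜 := ℝ) (fun q : ℝ × ℝ × ℝ × ℝ => q.2.2.1) _ p :=
    hasFDerivAt_snd.snd.fst
  have hZ : HasFDerivAt (𝕜 := ℝ) (fun q : ℝ × ℝ × ℝ × ℝ => q.2.2.2) _ p :=
    hasFDerivAt_snd.snd.snd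
  have H : HasFDerivAt cuspHeight _ p :=
    (((hX.pow 3).sub ((hX.const_mul 3).mul hT)).add (hY.pow 2)).sub (hZ.pow 2)
  rw [H.fderiv]
  simp only [Nat.add_one_sub_one, nsmul_eq_mul, Nat.cast_ofNat, pow_one, sub_apply, add_apply,
    smul_apply, ContinuousLinearMap.comp_apply, ContinuousLinearMap.coe_snd',
    ContinuousLinearMap.coe_fst', smul_eq_mul, mul_zero, zero_add]
  ring

theorem fderiv_cuspHeight_comp_inr_eq_zero_iff (p : ℝ × ℝ × ℝ × ℝ) :
    (fderiv ℝ cuspHeight p).toLinearMap ∘ₗ LinearMap.inr ℝ ℝ (ℝ × ℝ × ℝ) = 0 ↔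
      p.2.1 ^ 2 = p.1 ∧ p.2.2.1 = 0 ∧ p.2.2.2 = 0 := by
  simp only [LinearMap.ext_iff, LinearMap.comp_apply, LinearMap.inr_apply,
    ContinuousLinearMap.coe_coe, LinearMap.zero_apply, fderiv_cuspHeight_inr]
  constructor
  · intro h
    have h1 := h (1, 0, 0)
    have h2 := h (0, 1, 0)
    have h3 := h (0, 0, 1)
    simp only [mul_one, mul_zero, sub_zero, add_zero, zero_add, zero_sub] at h1 h2 h3
    exact ⟨by linarith, by linarith, by linarith⟩
  · rintro ⟨hxt, hy, hz⟩ w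
    simp [hxt, hy, hz]

theorem rank_fderiv_cusp_lt_two_iff (p : ℝ × ℝ × ℝ × ℝ) :
    LinearMap.rank (fderiv ℝ (fun q => (q.1, cuspHeight q)) p).toLinearMap < 2 ↔
      p.2.1 ^ 2 = p.1 ∧ p.2.2.1 = 0 ∧ p.2.2.2 = 0 := by
  have hfd : fderiv ℝ (fun q => (q.1, cuspHeight q)) p =
      (ContinuousLinearMap.fst ℝ ℝ (ℝ × ℝ × ℝ)).prod (fderiv ℝ cuspHeight p) :=
    (hasFDerivAt_fst.prodMk (differentiable_cuspHeight p).hasFDerivAt).fderiv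
  have htwo : (2 : Cardinal) = Module.finrank ℝ (ℝ × ℝ) := by simp
  rw [hfd, htwo, ContinuousLinearMap.coe_prod, LinearMap.rank_lt_finrank_iff_not_surjective,
    ContinuousLinearMap.coe_fst, LinearMap.surjective_fst_prod_iff, not_not,
    fderiv_cuspHeight_comp_inr_eq_zero_iff]

/-- The cusp-model near-symplectic form `ω_ε` is closed, and its zero set is
exactly `{x² = t, y = 0, z = 0}`, the critical point set of the cusp model
`f(t,x,y,z) = (t, x³ − 3xt + y² − z²)`. -/
theorem stmt10 (ε : ℝ) (hε : 0 < ε) :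
    (∀ t x y z : ℝ,
      pT (Cxy ε) t x y z - pX (Cty ε) t x y z + pY (Ctx ε) t x y z = 0 ∧
      pT (Cxz ε) t x y z - pX (Ctz ε) t x y z + pZ (Ctx ε) t x y z = 0 ∧
      pT (Cyz ε) t x y z - pY (Ctz ε) t x y z + pZ (Cty ε) t x y z = 0 ∧
      pX (Cyz ε) t x y z - pY (Cxz ε) t x y z + pZ (Cxy ε) t x y z = 0) ∧
    {p : ℝ × ℝ × ℝ × ℝ |
        Ctx ε p.1 p.2.1 p.2.2.1 p.2.2.2 = 0 ∧ Cty ε p.1 p.2.1 p.2.2.1 p.2.2.2 = 0 ∧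
        Ctz ε p.1 p.2.1 p.2.2.1 p.2.2.2 = 0 ∧ Cxy ε p.1 p.2.1 p.2.2.1 p.2.2.2 = 0 ∧
        Cxz ε p.1 p.2.1 p.2.2.1 p.2.2.2 = 0 ∧ Cyz ε p.1 p.2.1 p.2.2.1 p.2.2.2 = 0} =
      {p : ℝ × ℝ × ℝ × ℝ | p.2.1 ^ 2 = p.1 ∧ p.2.2.1 = 0 ∧ p.2.2.2 = 0} ∧
    {p : ℝ × ℝ × ℝ × ℝ | p.2.1 ^ 2 = p.1 ∧ p.2.2.1 = 0 ∧ p.2.2.2 = 0} =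
      {p : ℝ × ℝ × ℝ × ℝ |
        LinearMap.rank (fderiv ℝ
          (fun q : ℝ × ℝ × ℝ × ℝ =>
            ((q.1, q.2.1 ^ 3 - 3 * q.2.1 * q.1 + q.2.2.1 ^ 2 - q.2.2.2 ^ 2) : ℝ × ℝ))
          p).toLinearMap < 2} := by
  refine ⟨cuspForm_closed ε, ?_, ?_⟩
  · ext p
    exact cuspForm_eq_zero_iff hε.ne' _ _ _ _
  · ext p
    exact (rank_fderiv_cusp_lt_two_iff p).symm
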